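/- arXiv:0909.4417 — 3 statements merged into one kernel-verified Lean document; each statement's English description precedes it below -/
import Mathlib

section
/- The horizontal generating function identity for r-Stirling numbers: (x+r)^n = \sum_{k=0}^n S_r(n+r, k+r) x(x-1)\cdots(x-k+1) holds as an identity of polynomials. -/
/-- `rS r n k` is the r-Stirling number of the second kind `S_r(n+r, k+r)`. -/
def rS (r : ℕ) : ℕ → ℕ → ℕ
  | 0, 0 => 1
  | 0, _ + 1 => 0
  | n + 1, 0 => r * rS r n 0
  | n + 1, k + 1 => (k + 1 + r) * rS r n (k + 1) + rS r n k

/-- The r-Stirling number of the second kind `S_r(n,k)`. -/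
def rStirling (r n k : ℕ) : ℕ :=
  if r ≤ n ∧ r ≤ k then rS r (n - r) (k - r) else 0

/-- The r-Bell polynomial `B_{n,r}(x)` as a real function. -/
def rBellPoly (r n : ℕ) (x : ℝ) : ℝ :=
  ∑ k ∈ Finset.range (n + 1), (rS r n k : ℝ) * x ^ k

/-- The r-Bell number `B_{n,r}`. -/
def rBell (r n : ℕ) : ℕ :=
  ∑ k ∈ Finset.range (n + 1), rS r n k

/-!
Multiplying the falling factorial `x(x-1)⋯(x-k+1)` by `x + r` gives
`x(x-1)⋯(x-k) + (k + r) · x(x-1)⋯(x-k+1)`. Hence multiplying the expansion of `(x + r)^n` in the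
falling-factorial basis by `x + r` produces exactly the coefficients of the recurrence
`S_r(n+1, k) = (k + r) S_r(n, k) + S_r(n, k-1)` defining `rS`, and the identity follows by
induction on `n`.
-/

open Polynomial Finset

theorem rS_eq_zero_of_lt (r : ℕ) : ∀ {n k : ℕ}, n < k → rS r n k = 0
  | 0, _ + 1, _ => rfl
  | n + 1, k + 1, h => by
    rw [rS, rS_eq_zero_of_lt r (by omega : n < k + 1), rS_eq_zero_of_lt r (by omega : n < k),
      mul_zero]

theorem rS_succ_succ (r n k : ℕ) : rS r (n + 1) (k + 1) = (k + 1 + r) * rS r n (k + 1) + rS r n k :=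
  rfl

theorem rS_succ_zero (r n : ℕ) : rS r (n + 1) 0 = r * rS r n 0 :=
  rfl

section

variable {R : Type*} [CommRing R]

theorem descPochhammer_eq_prod_range (k : ℕ) :
    descPochhammer R k = ∏ i ∈ range k, (X - (i : R[X])) := by
  induction k with
  | zero => simp
  | succ k ih => rw [descPochhammer_succ_right, ih, prod_range_succ]

theorem X_add_natCast_mul_descPochhammer (r k : ℕ) :
    (X + (r : R[X])) * descPochhammer R k =
      descPochhammer R (k + 1) + ((k + r : ℕ) : R[X]) * descPochhammer R k := by
  rw [descPochhammer_succ_right]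
  push_cast
  ring

theorem X_add_natCast_mul_sum_rS_mul_descPochhammer (r : ℕ) {n N : ℕ} (hN : n < N) :
    (X + (r : R[X])) * ∑ k ∈ range N, (rS r n k : R[X]) * descPochhammer R k =
      ∑ k ∈ range (N + 1), (rS r (n + 1) k : R[X]) * descPochhammer R k := by
  set P : ℕ → R[X] := descPochhammer R
  set g : ℕ → R[X] := fun k ↦ ((k + r : ℕ) : R[X]) * (rS r n k : R[X]) * P k
  have hg : ∑ k ∈ range N, g (k + 1) + g 0 = ∑ k ∈ range N, g k := by
    rw [← sum_range_succ', sum_range_succ, add_eq_left]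
    simp [g, rS_eq_zero_of_lt r hN]
  calc (X + (r : R[X])) * ∑ k ∈ range N, (rS r n k : R[X]) * P k
      = ∑ k ∈ range N, (rS r n k : R[X]) * P (k + 1) + ∑ k ∈ range N, g k := by
        rw [mul_sum, ← sum_add_distrib]
        refine sum_congr rfl fun k _ ↦ ?_
        rw [mul_left_comm, X_add_natCast_mul_descPochhammer]
        ring
    _ = ∑ k ∈ range N, ((rS r n k : R[X]) * P (k + 1) + g (k + 1)) + g 0 := by
        rw [← hg, sum_add_distrib, add_assoc]
    _ = ∑ k ∈ range (N + 1), (rS r (n + 1) k : R[X]) * P k := by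
        rw [sum_range_succ']
        congr 1
        · refine sum_congr rfl fun k _ ↦ ?_
          rw [rS_succ_succ]
          push_cast [g]
          ring
        · rw [rS_succ_zero]
          push_cast [g]
          ring

theorem X_add_natCast_pow_eq_sum_rS_mul_descPochhammer (r n : ℕ) :
    (X + (r : R[X])) ^ n = ∑ k ∈ range (n + 1), (rS r n k : R[X]) * descPochhammer R k := by
  induction n with
  | zero => simp [rS]
  | succ n ih =>
    rw [pow_succ', ih, X_add_natCast_mul_sum_rS_mul_descPochhammer r n.lt_succ_self]

end

theorem rStirling_horizontal (n r : ℕ) :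
    (Polynomial.X + Polynomial.C (r : ℝ)) ^ n =
      ∑ k ∈ Finset.range (n + 1),
        Polynomial.C (rS r n k : ℝ) *
          ∏ i ∈ Finset.range k, (Polynomial.X - Polynomial.C (i : ℝ)) := by
  simp only [map_natCast, ← descPochhammer_eq_prod_range]
  exact X_add_natCast_pow_eq_sum_rS_mul_descPochhammer r n
end

section
/- For all n, k, r: k! S_r(n+r, k+r) = \sum_{j=0}^k (-1)^{k-j} \binom{k}{j} (j+r)^n. -/
open Finset

lemma rS_key (n k r : ℕ) :
    ∑ j ∈ range (k + 2), (-1 : ℤ) ^ (k + 1 - j) * ((k+1).choose j : ℤ) * ((j : ℤ) + r) ^ (n+1)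
      = (k + 1 + r) * ∑ j ∈ range (k + 2), (-1 : ℤ) ^ (k + 1 - j) * ((k+1).choose j : ℤ) * ((j : ℤ) + r) ^ n
        + (k + 1) * ∑ j ∈ range (k + 1), (-1 : ℤ) ^ (k - j) * (k.choose j : ℤ) * ((j : ℤ) + r) ^ n := by
  have hext : ∑ j ∈ range (k + 2), (-1 : ℤ) ^ (k - j) * (k.choose j : ℤ) * ((j : ℤ) + r) ^ n
      = ∑ j ∈ range (k + 1), (-1 : ℤ) ^ (k - j) * (k.choose j : ℤ) * ((j : ℤ) + r) ^ n := by
    rw [sum_range_succ]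
    simp [Nat.choose_eq_zero_of_lt (Nat.lt_succ_self k)]
  rw [← hext, mul_sum, mul_sum, ← sum_add_distrib]
  apply sum_congr rfl
  intro j hj
  have hjk : j ≤ k + 1 := Nat.lt_succ_iff.mp (mem_range.mp hj)
  rcases Nat.lt_or_ge j (k + 1) with hlt | hge
  · have hjk' : j ≤ k := Nat.lt_succ_iff.mp hlt
    have hc : ((k+1).choose j : ℤ) * ((k : ℤ) + 1 - j) = ((k : ℤ) + 1) * (k.choose j : ℤ) := by
      have h := Nat.choose_mul_succ_eq k j
      have hsub : ((k + 1 - j : ℕ) : ℤ) = (k : ℤ) + 1 - j := by omega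
      calc ((k+1).choose j : ℤ) * ((k : ℤ) + 1 - j)
          = (((k+1).choose j * (k + 1 - j) : ℕ) : ℤ) := by push_cast [hsub]; ring
        _ = ((k.choose j * (k + 1) : ℕ) : ℤ) := by rw [← h]
        _ = ((k : ℤ) + 1) * (k.choose j : ℤ) := by push_cast; ring
    have hsign : ((-1 : ℤ)) ^ (k + 1 - j) = -(-1 : ℤ) ^ (k - j) := by
      have h : k + 1 - j = (k - j) + 1 := by omega
      rw [h, pow_succ]; ring
    rw [hsign]
    linear_combination ((-1 : ℤ) ^ (k - j) * ((j : ℤ) + r) ^ n) * hc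
  · have hj1 : j = k + 1 := le_antisymm hjk hge
    subst hj1
    simp [Nat.choose_eq_zero_of_lt (Nat.lt_succ_self k)]
    ring

theorem rStirling_explicit (n k r : ℕ) :
    (k.factorial : ℤ) * (rS r n k : ℤ) =
      ∑ j ∈ Finset.range (k + 1),
        (-1) ^ (k - j) * (k.choose j : ℤ) * ((j + r : ℤ)) ^ n := by
  induction n generalizing k with
  | zero =>
    cases k with
    | zero => simp [rS]
    | succ k =>
      have h0 : (rS r 0 (k+1) : ℤ) = 0 := by simp [rS]
      rw [h0, mul_zero]
      have htr : ∑ j ∈ range (k + 2), (-1 : ℤ) ^ (k + 1 - j) * ((k+1).choose j : ℤ) * ((j : ℤ) + r) ^ 0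
          = (-1 : ℤ) ^ (k + 1) * ∑ j ∈ range (k + 2), (-1 : ℤ) ^ j * ((k+1).choose j : ℤ) := by
        rw [mul_sum]
        apply sum_congr rfl
        intro j hj
        have hjk : j ≤ k + 1 := Nat.lt_succ_iff.mp (mem_range.mp hj)
        have h1 : (-1 : ℤ) ^ (k + 1 - j) * (-1 : ℤ) ^ j = (-1 : ℤ) ^ (k + 1) := by
          rw [← pow_add, Nat.sub_add_cancel hjk]
        have hsq : ((-1 : ℤ) ^ j) * ((-1 : ℤ) ^ j) = 1 := by
          rw [← pow_add, ← two_mul, pow_mul]; norm_num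
        rw [pow_zero, mul_one]
        linear_combination (((k+1).choose j : ℤ) * (-1 : ℤ) ^ j) * h1
          - ((-1 : ℤ) ^ (k + 1 - j) * ((k+1).choose j : ℤ)) * hsq
      rw [htr, Int.alternating_sum_range_choose]
      simp
  | succ n ih =>
    cases k with
    | zero =>
      have h0 := ih 0
      simp only [rS]
      push_cast
      simp only [range_one, sum_singleton, Nat.choose_self, Nat.cast_one, Nat.factorial_zero,
        Nat.cast_zero, zero_add, one_mul, mul_one, Nat.sub_self, pow_zero, Nat.cast_ofNat] at h0 ⊢
      rw [h0]
      ring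
    | succ k =>
      have h1 := ih (k + 1)
      have h2 := ih k
      have key := rS_key n k r
      simp only [rS]
      push_cast
      have hLHS : ((k+1).factorial : ℤ) * (((k:ℤ) + 1 + r) * (rS r n (k+1) : ℤ) + (rS r n k : ℤ))
          = ((k:ℤ) + 1 + r) * (((k+1).factorial : ℤ) * (rS r n (k+1) : ℤ))
            + ((k:ℤ) + 1) * ((k.factorial : ℤ) * (rS r n k : ℤ)) := by
        rw [Nat.factorial_succ]; push_cast; ring
      push_cast at hLHS
      rw [hLHS, h1, h2]
      push_cast at key ⊢
      linarith [key]
end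

section
/- For all n, m, r: B_{n+m,r} = \sum_{j=0}^m S_r(m+r, j+r) B_{n, r+j} (Carlitz's identity). -/
lemma rS_eq_zero (r : ℕ) : ∀ n k, n < k → rS r n k = 0 := by
  intro n
  induction n with
  | zero =>
    intro k hk
    match k, hk with
    | k + 1, _ => rfl
  | succ n ih =>
    intro k hk
    match k, hk with
    | k + 1, hk =>
      show (k + 1 + r) * rS r n (k + 1) + rS r n k = 0
      rw [ih (k + 1) (by omega), ih k (by omega)]
      ring

lemma rS_P (r : ℕ) : ∀ n k, rS (r + 1) n k + r * rS r n (k + 1) = rS r (n + 1) (k + 1) := by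
  intro n
  induction n with
  | zero =>
    intro k
    cases k with
    | zero => simp [rS]
    | succ k => simp [rS]
  | succ n ih =>
    intro k
    cases k with
    | zero =>
      show (r + 1) * rS (r + 1) n 0 + r * ((0 + 1 + r) * rS r n 1 + rS r n 0)
          = (0 + 1 + r) * ((0 + 1 + r) * rS r n 1 + rS r n 0) + r * rS r n 0
      have h : rS (r + 1) n 0 + r * rS r n 1
          = (0 + 1 + r) * rS r n 1 + rS r n 0 := ih 0
      zify at h ⊢
      linear_combination ((r : ℤ) + 1) * h
    | succ k =>
      show ((k + 1 + (r + 1)) * rS (r + 1) n (k + 1) + rS (r + 1) n k)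
          + r * ((k + 1 + 1 + r) * rS r n (k + 1 + 1) + rS r n (k + 1))
          = (k + 1 + 1 + r) * ((k + 1 + 1 + r) * rS r n (k + 1 + 1) + rS r n (k + 1))
            + ((k + 1 + r) * rS r n (k + 1) + rS r n k)
      have h1 : rS (r + 1) n (k + 1) + r * rS r n (k + 1 + 1)
          = (k + 1 + 1 + r) * rS r n (k + 1 + 1) + rS r n (k + 1) := ih (k + 1)
      have h2 : rS (r + 1) n k + r * rS r n (k + 1)
          = (k + 1 + r) * rS r n (k + 1) + rS r n k := ih k
      zify at h1 h2 ⊢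
      linear_combination ((k : ℤ) + 2 + r) * h1 + h2

lemma rBell_succ (r n : ℕ) : rBell r (n + 1) = r * rBell r n + rBell (r + 1) n := by
  unfold rBell
  rw [Finset.sum_range_succ']
  have e1 : ∀ k, rS r (n + 1) (k + 1) = rS (r + 1) n k + r * rS r n (k + 1) := by
    intro k; rw [rS_P]
  simp only [e1]
  rw [Finset.sum_add_distrib, ← Finset.mul_sum]
  have e2 : rS r (n + 1) 0 = r * rS r n 0 := rfl
  rw [e2]
  have e3 : (∑ k ∈ Finset.range (n + 1), rS r n (k + 1)) + rS r n 0
      = ∑ k ∈ Finset.range (n + 1), rS r n k := by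
    rw [← Finset.sum_range_succ' (rS r n) (n + 1),
      Finset.sum_range_succ (rS r n) (n + 1), rS_eq_zero r n (n + 1) (by omega)]
    exact Nat.add_zero _
  calc (∑ k ∈ Finset.range (n + 1), rS (r + 1) n k)
        + r * ∑ k ∈ Finset.range (n + 1), rS r n (k + 1) + r * rS r n 0
      = r * ((∑ k ∈ Finset.range (n + 1), rS r n (k + 1)) + rS r n 0)
        + ∑ k ∈ Finset.range (n + 1), rS (r + 1) n k := by ring
    _ = _ := by rw [e3]

theorem rBell_carlitz (n m r : ℕ) :
    rBell r (n + m) = ∑ j ∈ Finset.range (m + 1), rS r m j * rBell (r + j) n := by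
  induction m generalizing n with
  | zero => simp [rS]
  | succ m ih =>
    have shift : (∑ j ∈ Finset.range (m + 1),
          (j + 1 + r) * rS r m (j + 1) * rBell (r + (j + 1)) n)
          + (0 + r) * rS r m 0 * rBell (r + 0) n
        = ∑ j ∈ Finset.range (m + 1), (j + r) * rS r m j * rBell (r + j) n := by
      rw [← Finset.sum_range_succ' (fun j => (j + r) * rS r m j * rBell (r + j) n) (m + 1),
        Finset.sum_range_succ (fun j => (j + r) * rS r m j * rBell (r + j) n) (m + 1),
        rS_eq_zero r m (m + 1) (by omega)]
      simp
    have key : ∑ j ∈ Finset.range (m + 1 + 1), rS r (m + 1) j * rBell (r + j) n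
        = ∑ j ∈ Finset.range (m + 1), rS r m j * rBell (r + j) (n + 1) := by
      rw [Finset.sum_range_succ']
      have e1 : ∀ j ∈ Finset.range (m + 1), rS r (m + 1) (j + 1) * rBell (r + (j + 1)) n
          = (j + 1 + r) * rS r m (j + 1) * rBell (r + (j + 1)) n
            + rS r m j * rBell (r + (j + 1)) n := by
        intro j _
        show ((j + 1 + r) * rS r m (j + 1) + rS r m j) * rBell (r + (j + 1)) n = _
        ring
      have e4 : ∀ j ∈ Finset.range (m + 1), rS r m j * rBell (r + j) (n + 1)
          = (j + r) * rS r m j * rBell (r + j) n + rS r m j * rBell (r + (j + 1)) n := by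
        intro j _
        rw [rBell_succ (r + j) n]
        have h5 : r + (j + 1) = r + j + 1 := by omega
        rw [h5]
        ring
      have e0 : rS r (m + 1) 0 = r * rS r m 0 := rfl
      rw [Finset.sum_congr rfl e1, Finset.sum_congr rfl e4, e0,
        Finset.sum_add_distrib, Finset.sum_add_distrib, ← shift]
      ring
    rw [key, ← ih (n + 1)]
    congr 1
    omega
end
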